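/- Let a, b be coprime positive integers and fix k with 0 ≤ k < b. A chip configuration D with 0 ≤ D(i) < a for all i ∈ {1,…,b} is k-skeletal if and only if the path lpath(D) is k-skeletal. -/

import Mathlib

/-- A lattice path is a list of steps, `true` = north step, `false` = east step.
`Q` is a path from `(0,0)` to `(a,b)` iff it has `b` norths and `a` easts. -/
def IsPath (a b : ℕ) (Q : List Bool) : Prop :=
  Q.count true = b ∧ Q.count false = a

/-- Level `a·y − b·x` of the lattice point reached after the first `m` steps. -/
def lvlAt (a b : ℕ) (Q : List Bool) (m : ℕ) : ℤ :=
  (a : ℤ) * ((Q.take m).count true : ℤ) - (b : ℤ) * ((Q.take m).count false : ℤ)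

/-- Condition (R1): the last `k+1` north steps of `Q` start at nonnegative
level (a north step at index `m` is among the last `k+1` norths iff at most `k`
norths occur strictly after it). -/
def R1 (a b k : ℕ) (Q : List Bool) : Prop :=
  ∀ m < Q.length, Q.getD m false = true → (Q.drop (m + 1)).count true ≤ k →
    0 ≤ lvlAt a b Q m

/-- `Q` is an `(a,b)`-Dyck path: every north step starts at nonnegative level. -/
def IsDyck (a b : ℕ) (Q : List Bool) : Prop :=
  ∀ m < Q.length, Q.getD m false = true → 0 ≤ lvlAt a b Q m

/-- `Q` is `k`-skeletal: (R1) holds, and (R2) every cyclic shift of `Q` at a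
lattice point of positive level fails (R1).  (The cyclic shift of `Q` at the
point reached after `m` steps is `Q.rotate m`.) -/
def SkeletalPath (a b k : ℕ) (Q : List Bool) : Prop :=
  R1 a b k Q ∧ ∀ m ≤ Q.length, 0 < lvlAt a b Q m → ¬ R1 a b k (Q.rotate m)

/-- A labeled path: `none` = east step, `some i` = north step labeled `i`.
It has `a` east steps, each label `1,…,b` exactly once, and labels increase
along each run of consecutive north steps. -/
def IsLabeled (a b : ℕ) (L : List (Option (Fin b))) : Prop :=
  L.count none = a ∧ (∀ i : Fin b, L.count (some i) = 1) ∧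
  ∀ m : ℕ, ∀ i j : Fin b, L.getD m none = some i → L.getD (m + 1) none = some j → i < j

/-- The underlying unlabeled path of a labeled path. -/
def unlabel {b : ℕ} (L : List (Option (Fin b))) : List Bool :=
  L.map Option.isSome

/-- The cluster-fire move `φ_S` for the quantized rational model on the
complete graph (`c = 1`): each `i ∈ S` loses `1 + ⌊(b−s)·a/b⌋` chips and each
`j ∉ S` gains `⌊s·a/b⌋` chips, where `s = |S|`. -/
def cfire (a b : ℕ) (S : Finset (Fin b)) (D : Fin b → ℤ) : Fin b → ℤ :=
  fun i =>
    if i ∈ S then D i - 1 - (((b - S.card) * a / b : ℕ) : ℤ)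
    else D i + ((S.card * a / b : ℕ) : ℤ)

/-- The borrow move `β_S = φ_S⁻¹`. -/
def cborrow (a b : ℕ) (S : Finset (Fin b)) (D : Fin b → ℤ) : Fin b → ℤ :=
  fun i =>
    if i ∈ S then D i + 1 + (((b - S.card) * a / b : ℕ) : ℤ)
    else D i - ((S.card * a / b : ℕ) : ℤ)

/-- `D` is `k`-stable: `D ≥ 0` and no `k`-firing move `φ_S` (with
`0 < |S| ≤ k+1`) is legal on `D`. -/
def KStable (a b k : ℕ) (D : Fin b → ℤ) : Prop :=
  (∀ i, 0 ≤ D i) ∧ ∀ S : Finset (Fin b), S.Nonempty → S.card ≤ k + 1 →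
    ¬ (∀ i, 0 ≤ cfire a b S D i)

/-- `D` is `k`-skeletal: `D` is `k`-stable and no legal nonempty borrow move
produces a `k`-stable configuration. -/
def KSkeletal (a b k : ℕ) (D : Fin b → ℤ) : Prop :=
  KStable a b k D ∧ ∀ T : Finset (Fin b), T.Nonempty →
    (∀ i, 0 ≤ cborrow a b T D i) → ¬ KStable a b k (cborrow a b T D)

/-- `i` is poorer than `j` in configuration `D`. -/
def Poorer {b : ℕ} (D : Fin b → ℤ) (i j : Fin b) : Prop :=
  D i < D j ∨ (D i = D j ∧ i < j)

/-- `L` is the labeled path `lpath D`: a valid labeled path in which the north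
step labeled `i` lies in column `D i`, i.e. is preceded by exactly `D i` east
steps.  (These conditions determine `L` uniquely.) -/
def IsLpath (a b : ℕ) (D : Fin b → ℤ) (L : List (Option (Fin b))) : Prop :=
  IsLabeled a b L ∧
  ∀ m : ℕ, ∀ i : Fin b, L.getD m none = some i → ((L.take m).count none : ℤ) = D i


/-!
Read the column of the north step labelled `i` as the chip count `D i` and its row as the rank of
`i` from poorest to richest. Against such a ranking, `k`-stability says exactly that each of the
`k + 1` richest chips has `b D i ≤ a · row i`, i.e. that its north step starts at nonnegative level:
this is (R1). Rotating the path at a lattice point of level `ℓ` lowers every level by `ℓ`, and if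
that point is `(c, t)` with `c` the column of minimal positive level at height `t`, the
configuration read off the rotated path is the borrow `β_T D` for `T` the `t` poorest chips.
Conversely, a borrow producing a `k`-stable configuration leaves every chip below `a`, which forces
`T` to consist of the chips in the lowest `|T|` rows and the point `(c, |T|)` to lie on the path.
A rotation at a point of positive level satisfying (R1) can be moved up to the first height `z`
at which `(c_z, z)` lies on the path without breaking (R1), and that yields the borrow.
-/

open Finset

section Arithmetic

variable {a b : ℕ}

/-- The largest column `x` for which the point `(x, t)` has positive level `a t - b x`. -/
def minPosLevelCol (a b t : ℕ) : ℕ := (t * a - 1) / b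

lemma minPosLevelCol_spec (ha : 0 < a) (hb : 0 < b) {t : ℕ} (ht : 0 < t) :
    b * minPosLevelCol a b t < t * a ∧ t * a ≤ b * minPosLevelCol a b t + b := by
  have hdiv := Nat.div_add_mod (t * a - 1) b
  have hmod := Nat.mod_lt (t * a - 1) hb
  have hta : 0 < t * a := Nat.mul_pos ht ha
  unfold minPosLevelCol
  constructor <;> omega

lemma minPosLevelCol_lt (ha : 0 < a) (hb : 0 < b) {t : ℕ} (htb : t ≤ b) :
    minPosLevelCol a b t < a := by
  rw [minPosLevelCol, Nat.div_lt_iff_lt_mul hb, mul_comm a b]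
  have := Nat.mul_le_mul_right a htb
  have := Nat.mul_pos hb ha
  omega

lemma minPosLevelCol_level_pos (ha : 0 < a) (hb : 0 < b) {t : ℕ} (ht : 0 < t) :
    0 < (t : ℤ) * a - b * minPosLevelCol a b t := by
  have := (minPosLevelCol_spec ha hb ht).1
  zify at this
  linarith

lemma minPosLevelCol_level_le (ha : 0 < a) (hb : 0 < b) {t : ℕ} (ht : 0 < t) :
    (t : ℤ) * a - b * minPosLevelCol a b t ≤ b := by
  have := (minPosLevelCol_spec ha hb ht).2
  zify at this
  linarith

lemma lt_level_of_lt_minPosLevelCol (ha : 0 < a) (hb : 0 < b) {t x : ℕ} (ht : 0 < t)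
    (hx : x < minPosLevelCol a b t) : (b : ℤ) < t * a - b * x := by
  have h1 := minPosLevelCol_level_pos ha hb ht
  have h2 : (b : ℤ) * (x + 1) ≤ b * minPosLevelCol a b t :=
    mul_le_mul_of_nonneg_left (by exact_mod_cast hx) (Nat.cast_nonneg b)
  linarith

lemma level_minPosLevelCol_le (ha : 0 < a) (hb : 0 < b) {x y z : ℕ} (hy : 0 < y) (hyz : y ≤ z)
    (hx : x ≤ minPosLevelCol a b y) (hlt : y < z → x < minPosLevelCol a b y) :
    (z : ℤ) * a - b * minPosLevelCol a b z ≤ y * a - b * x := by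
  rcases hyz.eq_or_lt with rfl | hyz
  · have := mul_le_mul_of_nonneg_left (show (x : ℤ) ≤ minPosLevelCol a b y by exact_mod_cast hx)
      (Nat.cast_nonneg (α := ℤ) b)
    linarith
  · linarith [minPosLevelCol_level_le ha hb (hy.trans hyz),
      lt_level_of_lt_minPosLevelCol ha hb hy (hlt hyz)]

lemma minPosLevelCol_mono {t t' : ℕ} (h : t ≤ t') : minPosLevelCol a b t ≤ minPosLevelCol a b t' :=
  Nat.div_le_div_right (Nat.sub_le_sub_right (Nat.mul_le_mul_right a h) 1)

lemma le_minPosLevelCol (hb : 0 < b) {x y : ℕ} (h : b * x < y * a) :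
    x ≤ minPosLevelCol a b y := by
  rw [minPosLevelCol, Nat.le_div_iff_mul_le hb, mul_comm]
  omega

lemma cborrow_eq (ha : 0 < a) (hab : a.Coprime b) {T : Finset (Fin b)} (hT : T.Nonempty)
    (D : Fin b → ℤ) (i : Fin b) :
    cborrow a b T D i = D i - minPosLevelCol a b T.card + if i ∈ T then (a : ℤ) else 0 := by
  have hb : 0 < b := Fin.pos hT.choose
  have ht : 0 < T.card := card_pos.2 hT
  have htb : T.card ≤ b := (card_le_univ T).trans_eq (Fintype.card_fin b)
  obtain ⟨hlo, hhi⟩ := minPosLevelCol_spec ha hb ht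
  set c := minPosLevelCol a b T.card
  unfold cborrow
  split_ifs with hi
  · have hca : c < a := minPosLevelCol_lt ha hb htb
    have hq : (b - T.card) * a / b = a - 1 - c := by
      apply Nat.div_eq_of_lt_le
      · zify [htb, hca.le, ha, show c ≤ a - 1 by omega]
        nlinarith
      · zify [htb, hca.le, ha, show c ≤ a - 1 by omega]
        nlinarith
    rw [hq]
    omega
  · have htb' : T.card < b := (card_lt_univ_of_notMem hi).trans_eq (Fintype.card_fin b)
    have hndvd : ¬ b ∣ T.card * a := fun hdvd =>
      absurd (Nat.le_of_dvd ht (Nat.Coprime.dvd_of_dvd_mul_right hab.symm hdvd)) (by omega)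
    have hq : T.card * a / b = c := by
      apply Nat.div_eq_of_lt_le
      · rw [mul_comm]; exact hlo.le
      · have : T.card * a ≠ b * c + b := fun h => hndvd ⟨c + 1, by rw [h]; ring⟩
        calc T.card * a < b * c + b := lt_of_le_of_ne hhi this
          _ = (c + 1) * b := by ring
    rw [hq]
    ring

end Arithmetic

section Rank

variable {b : ℕ} {ρ : Fin b → ℕ}

lemma card_filter_comp_rank (hρ : ∀ i, ρ i < b) (hinj : Function.Injective ρ)
    (P : ℕ → Prop) [DecidablePred P] : #{i | P (ρ i)} = #{r ∈ range b | P r} := by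
  have himage : univ.image ρ = range b := by
    apply eq_of_subset_of_card_le
    · intro r hr
      obtain ⟨i, -, rfl⟩ := mem_image.1 hr
      exact mem_range.2 (hρ i)
    · rw [card_image_of_injective _ hinj, card_univ, Fintype.card_fin, card_range]
  rw [← himage, filter_image, card_image_of_injective _ hinj]

lemma card_filter_rank_lt (hρ : ∀ i, ρ i < b) (hinj : Function.Injective ρ) {t : ℕ} (ht : t ≤ b) :
    #{i | ρ i < t} = t := by
  rw [card_filter_comp_rank hρ hinj (· < t),
    show {r ∈ range b | r < t} = range t by ext; simp; omega, card_range]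

lemma card_filter_le_rank (hρ : ∀ i, ρ i < b) (hinj : Function.Injective ρ) (t : ℕ) :
    #{i | t ≤ ρ i} = b - t := by
  rw [card_filter_comp_rank hρ hinj (t ≤ ·),
    show {r ∈ range b | t ≤ r} = Ico t b by ext; simp; omega, Nat.card_Ico]

lemma exists_rank_eq (hρ : ∀ i, ρ i < b) (hinj : Function.Injective ρ) {r : ℕ} (hr : r < b) :
    ∃ i, ρ i = r := by
  have : #{i | ρ i = r} = 1 := by
    rw [card_filter_comp_rank hρ hinj (· = r), filter_eq', if_pos (mem_range.2 hr),
      card_singleton]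
  obtain ⟨i, hi⟩ := card_pos.1 (this ▸ Nat.one_pos)
  exact ⟨i, (mem_filter.1 hi).2⟩

lemma mem_iff_rank_lt_card (hρ : ∀ i, ρ i < b) (hinj : Function.Injective ρ) {T : Finset (Fin b)}
    (hT : ∀ i j, i ∈ T → ρ j ≤ ρ i → j ∈ T) (i : Fin b) : i ∈ T ↔ ρ i < T.card := by
  constructor
  · intro hi
    have hsub : ({j | ρ j < ρ i + 1} : Finset (Fin b)) ⊆ T := fun j hj =>
      hT i j hi (by simp at hj; omega)
    have := card_le_card hsub
    rwa [card_filter_rank_lt hρ hinj (hρ i)] at this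
  · intro hlt
    by_contra hi
    have hsub : T ⊆ ({j | ρ j < ρ i} : Finset (Fin b)) := fun j hj => by
      simp only [mem_filter, mem_univ, true_and]
      by_contra hji
      exact hi (hT j i hj (by omega))
    have := card_le_card hsub
    rw [card_filter_rank_lt hρ hinj (hρ i).le] at this
    omega

lemma exists_least_threshold_height {β : Fin b → ℕ} (hρ : ∀ i, ρ i < b)
    (hmono : ∀ i j, ρ i ≤ ρ j → β i ≤ β j) (f : ℕ → ℕ) {y : ℕ} (hyb : y ≤ b) :
    ∃ z, y ≤ z ∧ z ≤ b ∧ (∀ i, z ≤ ρ i → f z ≤ β i) ∧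
      ∀ i, y ≤ ρ i → ρ i < z → β i < f (ρ i) := by
  classical
  have hPb : y ≤ b ∧ ∀ i, b ≤ ρ i → f b ≤ β i := ⟨hyb, fun i h => absurd (hρ i) (by omega)⟩
  have hex : ∃ z, y ≤ z ∧ ∀ i, z ≤ ρ i → f z ≤ β i := ⟨b, hPb⟩
  obtain ⟨hyz, hz⟩ := Nat.find_spec hex
  refine ⟨Nat.find hex, hyz, Nat.find_min' hex hPb, hz, fun i hyi hiz => ?_⟩
  have := Nat.find_min hex hiz
  push Not at this
  obtain ⟨j, hij, hj⟩ := this hyi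
  exact (hmono i j hij).trans_lt hj

end Rank

section Stability

variable {a b k : ℕ}

lemma sub_one_sub_div_nonneg_iff (hb : 0 < b) {s : ℕ} (hs : s ≤ b) (z : ℤ) :
    0 ≤ z - 1 - (((b - s) * a / b : ℕ) : ℤ) ↔ (a : ℤ) * (b - s) < b * z := by
  have hb' : (0 : ℤ) < b := by exact_mod_cast hb
  rw [Int.natCast_div, show ∀ q : ℤ, 0 ≤ z - 1 - q ↔ q < z from fun q => by omega,
    Int.ediv_lt_iff_lt_mul hb']
  push_cast [hs]
  constructor <;> intro h <;> linarith

/-- `a (b - s) < b β_i` says that chip `i` can afford to lie in a firing set of size `s`. -/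
lemma kStable_iff_card (hb : 0 < b) (β : Fin b → ℤ) :
    KStable a b k β ↔ (∀ i, 0 ≤ β i) ∧
      ∀ s, 1 ≤ s → s ≤ k + 1 → #{i | (a : ℤ) * (b - s) < b * β i} < s := by
  refine and_congr_right fun h0 => ⟨fun hfire s hs1 hsk => ?_, fun hcard S hS hSk hlegal => ?_⟩
  · by_contra! hs
    have hsb : s ≤ b := hs.trans ((card_le_univ _).trans_eq (Fintype.card_fin b))
    obtain ⟨S, hSsub, rfl⟩ := exists_subset_card_eq hs
    refine hfire S (card_pos.1 (by omega)) hsk fun i => ?_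
    unfold cfire
    split_ifs with hi
    · exact (sub_one_sub_div_nonneg_iff hb hsb _).2 (mem_filter.1 (hSsub hi)).2
    · exact add_nonneg (h0 i) (Nat.cast_nonneg _)
  · have hsb : S.card ≤ b := (card_le_univ _).trans_eq (Fintype.card_fin b)
    have hsub : S ⊆ ({i | (a : ℤ) * (b - S.card) < b * β i} : Finset (Fin b)) := fun i hi => by
      have := hlegal i
      simp only [cfire, if_pos hi] at this
      exact mem_filter.2 ⟨mem_univ i, (sub_one_sub_div_nonneg_iff hb hsb _).1 this⟩
    have := hcard S.card (card_pos.2 hS) hSk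
    exact absurd (card_le_card hsub) (by omega)

lemma lt_of_kStable (ha : 0 < a) (hb : 0 < b) {β : Fin b → ℤ} (hβ : KStable a b k β) (i : Fin b) :
    β i < a := by
  have hempty := ((kStable_iff_card hb β).1 hβ).2 1 le_rfl (by omega)
  rw [Nat.lt_one_iff, card_eq_zero, filter_eq_empty_iff] at hempty
  have hi := hempty (mem_univ i)
  have ha' : (0 : ℤ) < a := by exact_mod_cast ha
  by_contra! h
  have : (b : ℤ) * a ≤ b * β i := mul_le_mul_of_nonneg_left h (by positivity)
  push_cast at hi
  nlinarith

variable {β : Fin b → ℤ} {ρ : Fin b → ℕ}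

lemma card_lt_iff_of_rank (hρ : ∀ i, ρ i < b) (hinj : Function.Injective ρ)
    (hmono : ∀ i j, ρ i ≤ ρ j → β i ≤ β j) :
    (∀ s, 1 ≤ s → s ≤ k + 1 → #{i | (a : ℤ) * (b - s) < b * β i} < s) ↔
      ∀ i, b - 1 - k ≤ ρ i → b * β i ≤ a * ρ i := by
  constructor
  · intro hcard i hi
    by_contra! hlt
    have hsub : ({j | ρ i ≤ ρ j} : Finset (Fin b)) ⊆
        ({j | (a : ℤ) * (b - (b - ρ i : ℕ)) < b * β j} : Finset (Fin b)) := fun j hj => by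
      simp only [mem_filter, mem_univ, true_and] at hj ⊢
      have := mul_le_mul_of_nonneg_left (hmono i j hj) (Nat.cast_nonneg (α := ℤ) b)
      rw [Nat.cast_sub (hρ i).le, sub_sub_cancel]
      linarith
    have := (card_le_card hsub).trans_lt (hcard (b - ρ i) (by have := hρ i; omega) (by omega))
    rw [card_filter_le_rank hρ hinj] at this
    omega
  · intro hlevel s hs1 hsk
    have hsub : ({j | (a : ℤ) * (b - s) < b * β j} : Finset (Fin b)) ⊆
        ({j | b + 1 - s ≤ ρ j} : Finset (Fin b)) := fun j hj => by
      simp only [mem_filter, mem_univ, true_and] at hj ⊢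
      by_contra! hjs
      -- the chip of rank `max (ρ j) (b - 1 - k)` is at least as rich as `j` and obeys the bound
      obtain ⟨i, hi⟩ := exists_rank_eq hρ hinj (show max (ρ j) (b - 1 - k) < b by
        have := hρ j; omega)
      have hβ := mul_le_mul_of_nonneg_left (hmono j i (hi ▸ le_max_left _ _))
        (Nat.cast_nonneg (α := ℤ) b)
      have hi' := hlevel i (hi ▸ le_max_right _ _)
      have hρs : ρ i ≤ b - s := by omega
      have hρs' : ((ρ i : ℕ) : ℤ) ≤ b - s := by
        rw [← Nat.cast_sub (by omega : s ≤ b)]; exact_mod_cast hρs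
      nlinarith
    have := card_le_card hsub
    rw [card_filter_le_rank hρ hinj] at this
    omega

lemma kStable_iff_of_rank (hb : 0 < b) (hρ : ∀ i, ρ i < b) (hinj : Function.Injective ρ)
    (hmono : ∀ i j, ρ i ≤ ρ j → β i ≤ β j) :
    KStable a b k β ↔ (∀ i, 0 ≤ β i) ∧ ∀ i, b - 1 - k ≤ ρ i → b * β i ≤ a * ρ i := by
  rw [kStable_iff_card hb, card_lt_iff_of_rank hρ hinj hmono]

end Stability

section LabeledPath

variable {a b k : ℕ} {L : List (Option (Fin b))}

lemma count_true_unlabel (L : List (Option (Fin b))) :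
    (unlabel L).count true = ∑ i, L.count (some i) := by
  induction L with
  | nil => simp [unlabel]
  | cons o L ih =>
    cases o with
    | none => simpa [unlabel, List.count_cons] using ih
    | some j =>
      simp only [unlabel, List.map_cons, Option.isSome_some, List.count_cons_self] at ih ⊢
      simp [ih, List.count_cons, sum_add_distrib]

lemma count_false_unlabel (L : List (Option (Fin b))) : (unlabel L).count false = L.count none := by
  induction L with
  | nil => simp [unlabel]
  | cons o L ih => cases o <;> simp_all [unlabel]

lemma unlabel_rotate (L : List (Option (Fin b))) (m : ℕ) :
    unlabel (L.rotate m) = (unlabel L).rotate m :=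
  List.map_rotate _ _ _

lemma count_rotate (L : List (Option (Fin b))) (m : ℕ) (o : Option (Fin b)) :
    (L.rotate m).count o = L.count o :=
  (L.rotate_perm m).count_eq o

lemma count_true_unlabel_eq (hL : ∀ i, L.count (some i) = 1) : (unlabel L).count true = b := by
  simp [count_true_unlabel, hL]

@[simp]
lemma length_unlabel (L : List (Option (Fin b))) : (unlabel L).length = L.length :=
  List.length_map _

lemma length_unlabel_eq_add (hL : ∀ i, L.count (some i) = 1) (hnone : L.count none = a) :
    (unlabel L).length = a + b := by
  rw [← List.count_true_add_count_false, count_true_unlabel_eq hL, count_false_unlabel, hnone,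
    add_comm]

/-- The index of the north step labelled `i`; it runs from `(labelCol L i, labelRow L i)`. -/
def labelPos (L : List (Option (Fin b))) (i : Fin b) : ℕ := L.idxOf (some i)

def labelRow (L : List (Option (Fin b))) (i : Fin b) : ℕ :=
  ((unlabel L).take (labelPos L i)).count true

def labelCol (L : List (Option (Fin b))) (i : Fin b) : ℕ :=
  ((unlabel L).take (labelPos L i)).count false

lemma lvlAt_labelPos (i : Fin b) :
    lvlAt a b (unlabel L) (labelPos L i) = a * labelRow L i - b * labelCol L i :=
  rfl

lemma labelPos_lt_length (hL : ∀ i, L.count (some i) = 1) (i : Fin b) : labelPos L i < L.length :=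
  List.idxOf_lt_length_of_mem (List.count_pos_iff.1 (by rw [hL]; exact one_pos))

lemma getElem_labelPos (hL : ∀ i, L.count (some i) = 1) (i : Fin b) :
    L[labelPos L i]'(labelPos_lt_length hL i) = some i :=
  List.getElem_idxOf _

lemma getD_labelPos (hL : ∀ i, L.count (some i) = 1) (i : Fin b) :
    L.getD (labelPos L i) none = some i := by
  rw [List.getD_eq_getElem?_getD, List.getElem?_eq_getElem (labelPos_lt_length hL i),
    getElem_labelPos hL, Option.getD_some]

lemma labelPos_lt_length_unlabel (hL : ∀ i, L.count (some i) = 1) (i : Fin b) :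
    labelPos L i < (unlabel L).length :=
  (length_unlabel L).symm ▸ labelPos_lt_length hL i

lemma getElem_unlabel_labelPos (hL : ∀ i, L.count (some i) = 1) (i : Fin b) :
    (unlabel L)[labelPos L i]'(labelPos_lt_length_unlabel hL i) = true := by
  simp [unlabel, getElem_labelPos hL]

lemma labelPos_eq_of_getElem (hL : ∀ i, L.count (some i) = 1) {n : ℕ} {i : Fin b}
    (hn : n < L.length) (h : L[n] = some i) : labelPos L i = n := by
  have hsplit : L = L.take n ++ some i :: L.drop (n + 1) := by
    rw [← h, ← List.drop_eq_getElem_cons hn, List.take_append_drop]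
  have hnot : some i ∉ L.take n := fun hmem => by
    have := hL i
    rw [hsplit, List.count_append, List.count_cons_self] at this
    have := List.count_pos_iff.2 hmem
    omega
  rw [labelPos, hsplit, List.idxOf_append_of_notMem hnot, List.idxOf_cons_self, List.length_take]
  omega

lemma labelPos_lt_iff_mem_take (hL : ∀ i, L.count (some i) = 1) {i : Fin b} {m : ℕ} :
    labelPos L i < m ↔ some i ∈ L.take m := by
  constructor
  · intro h
    rw [List.mem_take_iff_getElem]
    exact ⟨labelPos L i, by have := labelPos_lt_length hL i; omega, getElem_labelPos hL i⟩
  · rw [List.mem_take_iff_getElem]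
    rintro ⟨n, hn, h⟩
    rw [labelPos_eq_of_getElem hL _ h]
    omega

lemma count_some_take (hL : ∀ i, L.count (some i) = 1) (m : ℕ) (i : Fin b) :
    (L.take m).count (some i) = if labelPos L i < m then 1 else 0 := by
  split_ifs with h
  · exact le_antisymm (((List.take_sublist m L).count_le _).trans (hL i).le)
      (List.count_pos_iff.2 ((labelPos_lt_iff_mem_take hL).1 h))
  · exact List.count_eq_zero.2 (mt (labelPos_lt_iff_mem_take hL).2 h)

lemma count_true_take_unlabel (hL : ∀ i, L.count (some i) = 1) (m : ℕ) :
    ((unlabel L).take m).count true = #{i | labelPos L i < m} := by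
  rw [unlabel, ← List.map_take, ← unlabel, count_true_unlabel]
  simp [count_some_take hL]

lemma labelPos_eq_labelRow_add_labelCol (hL : ∀ i, L.count (some i) = 1) (i : Fin b) :
    labelPos L i = labelRow L i + labelCol L i := by
  have := labelPos_lt_length hL i
  rw [labelRow, labelCol, List.count_true_add_count_false, List.length_take, length_unlabel]
  omega

lemma count_true_take_labelPos_add_one (hL : ∀ i, L.count (some i) = 1) (i : Fin b) :
    ((unlabel L).take (labelPos L i + 1)).count true = labelRow L i + 1 := by
  rw [List.take_add_one, List.getElem?_eq_getElem (labelPos_lt_length_unlabel hL i),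
    getElem_unlabel_labelPos hL]
  simp [labelRow]

lemma labelRow_lt_of_labelPos_lt (hL : ∀ i, L.count (some i) = 1) {i j : Fin b}
    (h : labelPos L i < labelPos L j) : labelRow L i < labelRow L j := by
  have := (List.take_sublist_take_left (l := unlabel L) h).count_le true
  rw [count_true_take_labelPos_add_one hL] at this
  exact this

lemma labelCol_le_of_labelPos_le {i j : Fin b} (h : labelPos L i ≤ labelPos L j) :
    labelCol L i ≤ labelCol L j :=
  (List.take_sublist_take_left h).count_le false

lemma labelRow_lt (hL : ∀ i, L.count (some i) = 1) (i : Fin b) : labelRow L i < b := by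
  have := (List.take_sublist (labelPos L i + 1) (unlabel L)).count_le true
  rw [count_true_take_labelPos_add_one hL, count_true_unlabel_eq hL] at this
  omega

lemma labelRow_injective (hL : ∀ i, L.count (some i) = 1) : Function.Injective (labelRow L) := by
  intro i j hij
  rcases lt_trichotomy (labelPos L i) (labelPos L j) with h | h | h
  · exact absurd hij (labelRow_lt_of_labelPos_lt hL h).ne
  · have := getD_labelPos hL i
    rw [h, getD_labelPos hL j] at this
    exact (Option.some_injective _ this).symm
  · exact absurd hij (labelRow_lt_of_labelPos_lt hL h).ne'

lemma labelCol_mono (hL : ∀ i, L.count (some i) = 1) {i j : Fin b}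
    (h : labelRow L i ≤ labelRow L j) : labelCol L i ≤ labelCol L j :=
  labelCol_le_of_labelPos_le (not_lt.1 fun hji => (labelRow_lt_of_labelPos_lt hL hji).not_ge h)

lemma labelPos_lt_iff_labelRow_lt (hL : ∀ i, L.count (some i) = 1) (i : Fin b) (m : ℕ) :
    labelPos L i < m ↔ labelRow L i < ((unlabel L).take m).count true := by
  constructor
  · intro h
    have := (List.take_sublist_take_left (l := unlabel L) h).count_le true
    rw [count_true_take_labelPos_add_one hL] at this
    omega
  · intro h
    by_contra! hm
    exact (List.take_sublist_take_left (l := unlabel L) hm).count_le true |>.not_gt h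

lemma labelCol_le_count_take (hL : ∀ i, L.count (some i) = 1) {i : Fin b} {m : ℕ}
    (h : labelRow L i < ((unlabel L).take m).count true) :
    labelCol L i ≤ ((unlabel L).take m).count false :=
  (List.take_sublist_take_left ((labelPos_lt_iff_labelRow_lt hL i m).2 h).le).count_le false

lemma count_take_le_labelCol (hL : ∀ i, L.count (some i) = 1) {i : Fin b} {m : ℕ}
    (h : ((unlabel L).take m).count true ≤ labelRow L i) :
    ((unlabel L).take m).count false ≤ labelCol L i :=
  (List.take_sublist_take_left (not_lt.1 fun hlt =>
    ((labelPos_lt_iff_labelRow_lt hL i m).1 hlt).not_ge h)).count_le false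

end LabeledPath

section PathConfiguration

variable {a b k : ℕ} {L : List (Option (Fin b))}

lemma count_true_take_add_drop {Q : List Bool} {n : ℕ} (hn : n < Q.length) (h : Q[n] = true) :
    (Q.take n).count true + 1 + (Q.drop (n + 1)).count true = Q.count true := by
  conv_rhs => rw [← List.take_append_drop (n + 1) Q]
  rw [List.count_append, List.take_add_one, List.getElem?_eq_getElem hn, h]
  simp

lemma r1_unlabel_iff (hL : ∀ i, L.count (some i) = 1) :
    R1 a b k (unlabel L) ↔
      ∀ i, b - 1 - k ≤ labelRow L i → (b : ℤ) * labelCol L i ≤ a * labelRow L i := by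
  constructor
  · intro hR i hi
    have hsplit := count_true_take_add_drop (labelPos_lt_length_unlabel hL i)
      (getElem_unlabel_labelPos hL i)
    change labelRow L i + 1 + _ = _ at hsplit
    rw [count_true_unlabel_eq hL] at hsplit
    have := hR (labelPos L i) (labelPos_lt_length_unlabel hL i)
      (by rw [List.getD_eq_getElem?_getD,
        List.getElem?_eq_getElem (labelPos_lt_length_unlabel hL i), getElem_unlabel_labelPos hL,
        Option.getD_some]) (by omega)
    rw [lvlAt_labelPos] at this
    linarith
  · intro h n hn hnorth hk
    have hn' : n < L.length := by rwa [length_unlabel] at hn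
    rw [List.getD_eq_getElem?_getD, List.getElem?_eq_getElem hn, Option.getD_some] at hnorth
    simp only [unlabel, List.getElem_map] at hnorth
    obtain ⟨i, hi⟩ := Option.isSome_iff_exists.1 hnorth
    obtain rfl := labelPos_eq_of_getElem hL hn' hi
    have hsplit := count_true_take_add_drop hn (getElem_unlabel_labelPos hL i)
    change labelRow L i + 1 + _ = _ at hsplit
    rw [count_true_unlabel_eq hL] at hsplit
    rw [lvlAt_labelPos]
    linarith [h i (by omega)]

lemma kStable_labelCol_iff_r1 (hb : 0 < b) (hL : ∀ i, L.count (some i) = 1) :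
    KStable a b k (fun i => (labelCol L i : ℤ)) ↔ R1 a b k (unlabel L) := by
  rw [kStable_iff_of_rank hb (labelRow_lt hL) (labelRow_injective hL)
    (fun i j h => by exact_mod_cast labelCol_mono hL h), r1_unlabel_iff hL]
  simp

end PathConfiguration

section Rotation

variable {a b k : ℕ} {L : List (Option (Fin b))}

lemma List.take_idxOf_append {α : Type*} [BEq α] [LawfulBEq α] (u v : List α) (e : α) :
    (u ++ v).take ((u ++ v).idxOf e) =
      if e ∈ u then u.take (u.idxOf e) else u ++ v.take (v.idxOf e) := by
  split_ifs with h
  · rw [List.idxOf_append_of_mem h, List.take_append,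
      Nat.sub_eq_zero_of_le (List.idxOf_lt_length_iff.2 h).le, List.take_zero, List.append_nil]
  · rw [List.idxOf_append_of_notMem h, List.take_append, List.take_of_length_le (by omega),
      Nat.add_sub_cancel_left]

lemma unlabel_take (L : List (Option (Fin b))) (m : ℕ) : unlabel (L.take m) = (unlabel L).take m :=
  List.map_take

lemma count_take_labelPos_append_comm (u v : List (Option (Fin b)))
    (hL : ∀ i, (u ++ v).count (some i) = 1) (z : Bool) (i : Fin b) :
    ((unlabel (v ++ u)).take (labelPos (v ++ u) i)).count z + (unlabel u).count z =
      ((unlabel (u ++ v)).take (labelPos (u ++ v) i)).count z +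
        if some i ∈ u then (unlabel (u ++ v)).count z else 0 := by
  have hcount := hL i
  rw [List.count_append] at hcount
  simp only [labelPos, ← unlabel_take, List.take_idxOf_append]
  by_cases hu : some i ∈ u
  · have hv : some i ∉ v := fun hv => by
      have := List.count_pos_iff.2 hu
      have := List.count_pos_iff.2 hv
      omega
    simp only [hu, hv, if_true, if_false, unlabel, List.map_append, List.count_append]
    omega
  · have hv : some i ∈ v := List.count_pos_iff.1 (by rw [List.count_eq_zero.2 hu] at hcount; omega)
    simp only [hu, hv, if_true, if_false, unlabel, List.map_append, List.count_append]
    omega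

lemma count_take_labelPos_rotate (hL : ∀ i, L.count (some i) = 1) {m : ℕ} (hm : m ≤ L.length)
    (z : Bool) (i : Fin b) :
    ((unlabel (L.rotate m)).take (labelPos (L.rotate m) i)).count z +
        ((unlabel L).take m).count z =
      ((unlabel L).take (labelPos L i)).count z +
        if labelPos L i < m then (unlabel L).count z else 0 := by
  have h := count_take_labelPos_append_comm (L.take m) (L.drop m)
    (by rwa [List.take_append_drop]) z i
  rw [List.take_append_drop, ← List.rotate_eq_drop_append_take hm, unlabel_take] at h
  simpa only [← labelPos_lt_iff_mem_take hL] using h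

lemma labelRow_rotate (hL : ∀ i, L.count (some i) = 1) {m : ℕ} (hm : m ≤ L.length) (i : Fin b) :
    labelRow (L.rotate m) i + ((unlabel L).take m).count true =
      labelRow L i + if labelRow L i < ((unlabel L).take m).count true then b else 0 := by
  have := count_take_labelPos_rotate hL hm true i
  simp only [labelPos_lt_iff_labelRow_lt hL, count_true_unlabel_eq hL] at this
  exact this

lemma labelCol_rotate (hL : ∀ i, L.count (some i) = 1) (hnone : L.count none = a) {m : ℕ}
    (hm : m ≤ L.length) (i : Fin b) :
    labelCol (L.rotate m) i + ((unlabel L).take m).count false =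
      labelCol L i + if labelRow L i < ((unlabel L).take m).count true then a else 0 := by
  have := count_take_labelPos_rotate hL hm false i
  simp only [labelPos_lt_iff_labelRow_lt hL, count_false_unlabel, hnone] at this
  exact this

/-- Rotating at a point shifts all levels by the level of that point, because the full path has
level `a b - b a = 0`. -/
lemma r1_rotate_iff (hL : ∀ i, L.count (some i) = 1) (hnone : L.count none = a) {m : ℕ}
    (hm : m ≤ (unlabel L).length) :
    R1 a b k ((unlabel L).rotate m) ↔ ∀ i, b - 1 - k ≤ labelRow (L.rotate m) i →
      lvlAt a b (unlabel L) m ≤ lvlAt a b (unlabel L) (labelPos L i) := by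
  have hm' : m ≤ L.length := by rwa [length_unlabel] at hm
  rw [← unlabel_rotate, r1_unlabel_iff fun i => (count_rotate L m _).trans (hL i)]
  refine forall_congr' fun i => imp_congr_right fun _ => ?_
  have hr : ((labelRow (L.rotate m) i : ℕ) : ℤ) + ((unlabel L).take m).count true =
      labelRow L i + if labelRow L i < ((unlabel L).take m).count true then (b : ℤ) else 0 := by
    exact_mod_cast labelRow_rotate hL hm' i
  have hc : ((labelCol (L.rotate m) i : ℕ) : ℤ) + ((unlabel L).take m).count false =
      labelCol L i + if labelRow L i < ((unlabel L).take m).count true then (a : ℤ) else 0 := by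
    exact_mod_cast labelCol_rotate hL hnone hm' i
  have key : (a : ℤ) * labelRow (L.rotate m) i - b * labelCol (L.rotate m) i =
      lvlAt a b (unlabel L) (labelPos L i) - lvlAt a b (unlabel L) m := by
    rw [lvlAt_labelPos, lvlAt]
    split_ifs at hr hc <;> linear_combination (a : ℤ) * hr - (b : ℤ) * hc
  constructor <;> intro h <;> linarith

end Rotation

section Skeletal

variable {a b k : ℕ} {L : List (Option (Fin b))}

/-- The path passes through the lattice point `(c, t)`. -/
lemma count_take_add_of_between (hL : ∀ i, L.count (some i) = 1) (hnone : L.count none = a)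
    {t c : ℕ} (ht : t ≤ b) (hc : c ≤ a) (hlow : ∀ i, labelRow L i < t → labelCol L i ≤ c)
    (hhigh : ∀ i, t ≤ labelRow L i → c ≤ labelCol L i) :
    ((unlabel L).take (t + c)).count true = t ∧ ((unlabel L).take (t + c)).count false = c := by
  have hpos : ∀ i, labelPos L i < t + c ↔ labelRow L i < t := fun i => by
    rw [labelPos_eq_labelRow_add_labelCol hL]
    by_cases h : labelRow L i < t
    · have := hlow i h; omega
    · have := hhigh i (not_lt.1 h); omega
  have htrue : ((unlabel L).take (t + c)).count true = t := by
    rw [count_true_take_unlabel hL]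
    simp only [hpos]
    exact card_filter_rank_lt (labelRow_lt hL) (labelRow_injective hL) ht
  refine ⟨htrue, ?_⟩
  have := List.count_true_add_count_false ((unlabel L).take (t + c))
  rw [List.length_take, length_unlabel_eq_add hL hnone, htrue] at this
  omega

lemma cborrow_labelCol_eq (ha : 0 < a) (hab : a.Coprime b) (hL : ∀ i, L.count (some i) = 1)
    (hnone : L.count none = a) {T : Finset (Fin b)} (hT : T.Nonempty)
    (hTrow : ∀ i, i ∈ T ↔ labelRow L i < T.card) {m : ℕ} (hm : m ≤ L.length)
    (hy : ((unlabel L).take m).count true = T.card)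
    (hx : ((unlabel L).take m).count false = minPosLevelCol a b T.card) :
    cborrow a b T (fun i => (labelCol L i : ℤ)) = fun i => (labelCol (L.rotate m) i : ℤ) := by
  funext i
  have := labelCol_rotate hL hnone hm i
  rw [hy, hx] at this
  rw [cborrow_eq ha hab hT]
  by_cases hi : i ∈ T
  · rw [if_pos ((hTrow i).1 hi)] at this
    rw [if_pos hi]
    omega
  · rw [if_neg (mt (hTrow i).2 hi)] at this
    rw [if_neg hi]
    omega

lemma r1_rotate_of_r1_rotate (hL : ∀ i, L.count (some i) = 1) (hnone : L.count none = a)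
    {m m' : ℕ} (hm : m ≤ (unlabel L).length) (hm' : m' ≤ (unlabel L).length)
    (hy : ((unlabel L).take m).count true ≤ ((unlabel L).take m').count true)
    (hlvl : lvlAt a b (unlabel L) m' ≤ lvlAt a b (unlabel L) m)
    (hmid : ∀ i, ((unlabel L).take m).count true ≤ labelRow L i →
      labelRow L i < ((unlabel L).take m').count true →
        lvlAt a b (unlabel L) m' ≤ lvlAt a b (unlabel L) (labelPos L i))
    (hR : R1 a b k ((unlabel L).rotate m)) : R1 a b k ((unlabel L).rotate m') := by
  rw [r1_rotate_iff hL hnone hm] at hR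
  rw [r1_rotate_iff hL hnone hm']
  rw [length_unlabel] at hm hm'
  intro i hi
  have hr := labelRow_rotate hL hm i
  have hr' := labelRow_rotate hL hm' i
  have := labelRow_lt hL i
  by_cases hmid_i : ((unlabel L).take m).count true ≤ labelRow L i ∧
      labelRow L i < ((unlabel L).take m').count true
  · exact hmid i hmid_i.1 hmid_i.2
  · exact hlvl.trans (hR i (by split_ifs at hr hr' <;> omega))

lemma exists_kStable_cborrow_of_r1_rotate_minPosLevelCol (ha : 0 < a) (hb : 0 < b)
    (hab : a.Coprime b) (hL : ∀ i, L.count (some i) = 1) (hnone : L.count none = a) {z : ℕ}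
    (hz0 : 0 < z) (hzb : z ≤ b)
    (hzy : ((unlabel L).take (z + minPosLevelCol a b z)).count true = z)
    (hzx : ((unlabel L).take (z + minPosLevelCol a b z)).count false = minPosLevelCol a b z)
    (hR : R1 a b k ((unlabel L).rotate (z + minPosLevelCol a b z))) :
    ∃ T : Finset (Fin b), T.Nonempty ∧ (∀ i, 0 ≤ cborrow a b T (fun i => (labelCol L i : ℤ)) i) ∧
      KStable a b k (cborrow a b T fun i => (labelCol L i : ℤ)) := by
  set T : Finset (Fin b) := {i | labelRow L i < z}
  have hTcard : T.card = z := card_filter_rank_lt (labelRow_lt hL) (labelRow_injective hL) hzb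
  have hTne : T.Nonempty := card_pos.1 (hTcard ▸ hz0)
  have hTrow : ∀ i, i ∈ T ↔ labelRow L i < T.card := fun i => by simp [T, hTcard]
  have hm : z + minPosLevelCol a b z ≤ L.length := by
    have := minPosLevelCol_lt ha hb hzb
    rw [← length_unlabel, length_unlabel_eq_add hL hnone]
    omega
  have hborrow := cborrow_labelCol_eq ha hab hL hnone hTne hTrow hm (hzy.trans hTcard.symm)
    (by rw [hzx, hTcard])
  refine ⟨T, hTne, fun i => hborrow ▸ Nat.cast_nonneg _, ?_⟩
  rwa [hborrow, kStable_labelCol_iff_r1 hb fun i => (count_rotate L _ _).trans (hL i),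
    unlabel_rotate]

lemma exists_kStable_cborrow_of_r1_rotate (ha : 0 < a) (hb : 0 < b) (hab : a.Coprime b)
    (hL : ∀ i, L.count (some i) = 1) (hnone : L.count none = a) {m : ℕ}
    (hm : m ≤ (unlabel L).length) (hpos : 0 < lvlAt a b (unlabel L) m)
    (hR : R1 a b k ((unlabel L).rotate m)) :
    ∃ T : Finset (Fin b), T.Nonempty ∧ (∀ i, 0 ≤ cborrow a b T (fun i => (labelCol L i : ℤ)) i) ∧
      KStable a b k (cborrow a b T fun i => (labelCol L i : ℤ)) := by
  set y := ((unlabel L).take m).count true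
  set x := ((unlabel L).take m).count false
  have hlvl : lvlAt a b (unlabel L) m = y * a - b * x := by rw [lvlAt, mul_comm]
  have hyb : y ≤ b := ((List.take_sublist m _).count_le true).trans_eq (count_true_unlabel_eq hL)
  have hbxy : b * x < y * a := by
    rw [hlvl] at hpos
    exact_mod_cast (by linarith : (b : ℤ) * x < y * a)
  have hy0 : 0 < y := Nat.pos_of_ne_zero fun h => by simp [h] at hbxy
  -- move up to the first height `z ≥ y` whose point of minimal positive level lies on the path
  obtain ⟨z, hyz, hzb, hhigh, hledge⟩ := exists_least_threshold_height (labelRow_lt hL)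
    (fun i j => labelCol_mono hL) (minPosLevelCol a b) hyb
  have hz0 : 0 < z := hy0.trans_le hyz
  have hlow : ∀ i, labelRow L i < z → labelCol L i ≤ minPosLevelCol a b z := fun i hi => by
    by_cases hiy : labelRow L i < y
    · exact (labelCol_le_count_take hL hiy).trans
        ((le_minPosLevelCol hb hbxy).trans (minPosLevelCol_mono hyz))
    · exact (hledge i (not_lt.1 hiy) hi).le.trans (minPosLevelCol_mono hi.le)
  obtain ⟨hzy, hzx⟩ := count_take_add_of_between hL hnone hzb (minPosLevelCol_lt ha hb hzb).le
    hlow hhigh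
  have hlvl' : lvlAt a b (unlabel L) (z + minPosLevelCol a b z) =
      z * a - b * minPosLevelCol a b z := by
    rw [lvlAt, hzy, hzx, mul_comm]
  have hm' : z + minPosLevelCol a b z ≤ (unlabel L).length := by
    have := minPosLevelCol_lt ha hb hzb
    rw [length_unlabel_eq_add hL hnone]; omega
  refine exists_kStable_cborrow_of_r1_rotate_minPosLevelCol ha hb hab hL hnone hz0 hzb hzy hzx
    (r1_rotate_of_r1_rotate hL hnone hm hm' (by rw [hzy]; exact hyz) ?_ (fun i hyi hiz => ?_) hR)
  · rw [hlvl', hlvl]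
    refine level_minPosLevelCol_le ha hb hy0 hyz (le_minPosLevelCol hb hbxy) fun hyz => ?_
    obtain ⟨j, hj⟩ := exists_rank_eq (labelRow_lt hL) (labelRow_injective hL) (hyz.trans_le hzb)
    exact (count_take_le_labelCol hL hj.ge).trans_lt (hj ▸ hledge j hj.ge (hj ▸ hyz))
  · rw [hzy] at hiz
    rw [hlvl', lvlAt_labelPos, mul_comm (a : ℤ)]
    linarith [minPosLevelCol_level_le ha hb hz0,
      lt_level_of_lt_minPosLevelCol ha hb (hy0.trans_le hyi) (hledge i hyi hiz)]

lemma exists_r1_rotate_of_kStable_cborrow (ha : 0 < a) (hab : a.Coprime b)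
    (hL : ∀ i, L.count (some i) = 1) (hnone : L.count none = a) {T : Finset (Fin b)}
    (hT : T.Nonempty) (hst : KStable a b k (cborrow a b T fun i => (labelCol L i : ℤ))) :
    ∃ m ≤ (unlabel L).length, 0 < lvlAt a b (unlabel L) m ∧ R1 a b k ((unlabel L).rotate m) := by
  have hb : 0 < b := Fin.pos hT.choose
  have htb : T.card ≤ b := (card_le_univ T).trans_eq (Fintype.card_fin b)
  have hc := minPosLevelCol_lt ha hb htb
  -- after the borrow every chip is below `a`, so `T` is exactly the set of chips in columns `< c`
  have hmemT : ∀ i, i ∈ T ↔ labelCol L i < minPosLevelCol a b T.card := fun i => by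
    have hlt := lt_of_kStable ha hb hst i
    have hnn := hst.1 i
    rw [cborrow_eq ha hab hT] at hlt hnn
    by_cases hi : i ∈ T <;>
      simp only [hi, if_true, if_false, true_iff, false_iff, not_lt] at hlt hnn ⊢ <;> omega
  have hTrow : ∀ i, i ∈ T ↔ labelRow L i < T.card :=
    mem_iff_rank_lt_card (labelRow_lt hL) (labelRow_injective hL) fun i j hi hji =>
      (hmemT j).2 ((labelCol_mono hL hji).trans_lt ((hmemT i).1 hi))
  obtain ⟨hy, hx⟩ := count_take_add_of_between hL hnone htb hc.le
    (fun i hi => ((hmemT i).1 ((hTrow i).2 hi)).le)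
    (fun i hi => not_lt.1 fun h => (((hTrow i).1 ((hmemT i).2 h))).not_ge hi)
  have hm : T.card + minPosLevelCol a b T.card ≤ (unlabel L).length := by
    rw [length_unlabel_eq_add hL hnone]; omega
  refine ⟨_, hm, ?_, ?_⟩
  · rw [lvlAt, hy, hx, mul_comm (a : ℤ)]
    exact minPosLevelCol_level_pos ha hb (card_pos.2 hT)
  · rw [← unlabel_rotate, ← kStable_labelCol_iff_r1 hb fun i => (count_rotate L _ _).trans (hL i),
      ← cborrow_labelCol_eq ha hab hL hnone hT hTrow (by rwa [length_unlabel] at hm) hy hx]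
    exact hst

end Skeletal

theorem kSkeletal_iff_path_general (a b k : ℕ) (ha : 0 < a) (hb : 0 < b)
    (hab : a.Coprime b) (D : Fin b → ℤ)
    (L : List (Option (Fin b))) (hL : IsLpath a b D L) :
    KSkeletal a b k D ↔ SkeletalPath a b k (unlabel L) := by
  obtain ⟨⟨hnone, hcount, -⟩, hcol⟩ := hL
  obtain rfl : D = fun i => (labelCol L i : ℤ) := funext fun i => by
    rw [← hcol _ i (getD_labelPos hcount i), labelCol, ← unlabel_take, count_false_unlabel]
  refine and_congr (kStable_labelCol_iff_r1 hb hcount)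
    ⟨fun h m hm hpos hR => ?_, fun h T hT _ hst => ?_⟩
  · obtain ⟨T, hT, hnn, hst⟩ :=
      exists_kStable_cborrow_of_r1_rotate ha hb hab hcount hnone hm hpos hR
    exact h T hT hnn hst
  · obtain ⟨m, hm, hpos, hR⟩ := exists_r1_rotate_of_kStable_cborrow ha hab hcount hnone hT hst
    exact h m hm hpos hR

/-- a configuration `D` with `0 ≤ D i < a` is `k`-skeletal iff
the path `lpath D` is `k`-skeletal. -/
theorem kSkeletal_iff_path (a b k : ℕ) (ha : 0 < a) (hb : 0 < b)
    (hab : a.Coprime b) (hk : k < b) (D : Fin b → ℤ)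
    (hD : ∀ i, 0 ≤ D i ∧ D i < (a : ℤ))
    (L : List (Option (Fin b))) (hL : IsLpath a b D L) :
    KSkeletal a b k D ↔ SkeletalPath a b k (unlabel L) :=
  kSkeletal_iff_path_general a b k ha hb hab D L hL
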